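/- Define p : ℝ → [0,∞] by p(x) = (1/6)[|x|^{−1/2}·1_{0<|x|≤1} + x^{−2}·1_{|x|>1}]. Then p is a probability density with respect to Lebesgue measure (∫_ℝ p dλ = 1), and for any n ≥ 1 and any pairwise distinct real numbers x₁,…,xₙ, the likelihood of the translation model blows up near x₁: the product ∏_{i=1}^n p(x_i − θ) tends to +∞ as θ → x₁ with θ ∉ {x₁,…,xₙ}. In particular, for any parameter set Θ containing x₁ as a limit point of Θ \ {x₁,…,xₙ}, the supremum over θ ∈ Θ of the likelihood is +∞ and no maximum-likelihood estimator exists. -/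

import Mathlib

open MeasureTheory Filter

/-- The density `p(x) = (1/6)[|x|^{−1/2}·1_{0<|x|≤1} + x^{−2}·1_{|x|>1}]`. -/
noncomputable def unboundedDensity (x : ℝ) : ℝ :=
  (1/6) * (Set.indicator {y : ℝ | 0 < |y| ∧ |y| ≤ 1} (fun y => (Real.sqrt |y|)⁻¹) x
    + Set.indicator {y : ℝ | 1 < |y|} (fun y => (y ^ 2)⁻¹) x)

/-!
The likelihood `∏ᵢ p(xᵢ - θ)` has one factor, `p(x₁ - θ) = |x₁ - θ|^{-1/2}/6` for `θ` near
`x₁`, that blows up as `θ → x₁`, while the other factors converge to the positive numbers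
`p(xᵢ - x₁)`, because `p` is positive and continuous off the origin: there
`p(z) = min(|z|^{-1/2}, |z|^{-2})/6`. So the likelihood is unbounded near `x₁`, and a
maximiser on `Θ` would bound it.
The normalisation is `2 (∫₀¹ x^{-1/2}/6 + ∫₁^∞ x^{-2}/6) = 2 (1/3 + 1/6) = 1`.
-/

open Set Topology

theorem unboundedDensity_abs (x : ℝ) : unboundedDensity |x| = unboundedDensity x := by
  simp [unboundedDensity, Set.indicator, sq_abs]

theorem unboundedDensity_of_abs_le_one {z : ℝ} (h0 : z ≠ 0) (h1 : |z| ≤ 1) :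
    unboundedDensity z = 1/6 * |z| ^ (-(1/2) : ℝ) := by
  rw [unboundedDensity,
    indicator_of_mem (show z ∈ {y : ℝ | 0 < |y| ∧ |y| ≤ 1} from ⟨abs_pos.2 h0, h1⟩),
    indicator_of_notMem (show z ∉ {y : ℝ | 1 < |y|} from h1.not_gt), Real.sqrt_eq_rpow,
    ← Real.rpow_neg (abs_nonneg z), add_zero]

theorem unboundedDensity_of_one_lt_abs {z : ℝ} (h1 : 1 < |z|) :
    unboundedDensity z = 1/6 * |z| ^ (-2 : ℝ) := by
  rw [unboundedDensity, indicator_of_notMem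
    (show z ∉ {y : ℝ | 0 < |y| ∧ |y| ≤ 1} from fun h => h.2.not_gt h1),
    indicator_of_mem (show z ∈ {y : ℝ | 1 < |y|} from h1), Real.rpow_neg (abs_nonneg z),
    Real.rpow_two, sq_abs, zero_add]

theorem unboundedDensity_eq_min {z : ℝ} (h0 : z ≠ 0) :
    unboundedDensity z = 1/6 * min (|z| ^ (-(1/2) : ℝ)) (|z| ^ (-2 : ℝ)) := by
  rcases le_or_gt |z| 1 with h1 | h1
  · rw [unboundedDensity_of_abs_le_one h0 h1, min_eq_left
      (Real.rpow_le_rpow_of_exponent_ge (abs_pos.2 h0) h1 (by norm_num))]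
  · rw [unboundedDensity_of_one_lt_abs h1, min_eq_right
      (Real.rpow_le_rpow_of_exponent_le h1.le (by norm_num))]

theorem unboundedDensity_pos {z : ℝ} (h0 : z ≠ 0) : 0 < unboundedDensity z := by
  have := abs_pos.2 h0
  rw [unboundedDensity_eq_min h0]
  positivity

theorem continuousAt_unboundedDensity {z : ℝ} (h0 : z ≠ 0) :
    ContinuousAt unboundedDensity z := by
  have habs : |z| ≠ 0 := abs_ne_zero.2 h0
  refine ContinuousAt.congr ?_ ((eventually_ne_nhds h0).mono fun w hw =>
    (unboundedDensity_eq_min hw).symm)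
  exact continuousAt_const.mul ((continuous_abs.continuousAt.rpow_const (.inl habs)).min
    (continuous_abs.continuousAt.rpow_const (.inl habs)))

theorem tendsto_unboundedDensity_nhdsNE_zero : Tendsto unboundedDensity (𝓝[≠] 0) atTop := by
  have hpow : Tendsto (fun z : ℝ => 1/6 * |z| ^ (-(1/2) : ℝ)) (𝓝[≠] 0) atTop :=
    ((tendsto_rpow_neg_nhdsGT_zero (by norm_num)).comp tendsto_abs_nhdsNE_zero).const_mul_atTop
      (by norm_num)
  refine hpow.congr' ?_
  filter_upwards [self_mem_nhdsWithin,
    nhdsWithin_le_nhds (Icc_mem_nhds (by norm_num : (-1 : ℝ) < 0) one_pos)] with z h0 h1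
  exact (unboundedDensity_of_abs_le_one h0 (abs_le.2 h1)).symm

theorem unboundedDensity_of_mem_Ioc {x : ℝ} (hx : x ∈ Ioc (0 : ℝ) 1) :
    unboundedDensity x = 1/6 * x ^ (-(1/2) : ℝ) := by
  rw [unboundedDensity_of_abs_le_one hx.1.ne' (by rw [abs_of_pos hx.1]; exact hx.2),
    abs_of_pos hx.1]

theorem unboundedDensity_of_mem_Ioi {x : ℝ} (hx : x ∈ Ioi (1 : ℝ)) :
    unboundedDensity x = 1/6 * x ^ (-2 : ℝ) := by
  have hx0 : 0 < x := one_pos.trans hx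
  rw [unboundedDensity_of_one_lt_abs (by rwa [abs_of_pos hx0]), abs_of_pos hx0]

theorem integrableOn_unboundedDensity_Ioc : IntegrableOn unboundedDensity (Ioc 0 1) := by
  have h := intervalIntegral.intervalIntegrable_rpow' (a := 0) (b := 1) (r := -(1/2)) (by norm_num)
  rw [intervalIntegrable_iff_integrableOn_Ioc_of_le zero_le_one] at h
  exact IntegrableOn.congr_fun (h.const_mul (1/6))
    (fun x hx => (unboundedDensity_of_mem_Ioc hx).symm) measurableSet_Ioc

theorem integrableOn_unboundedDensity_Ioi : IntegrableOn unboundedDensity (Ioi 1) :=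
  IntegrableOn.congr_fun
    ((integrableOn_Ioi_rpow_of_lt (by norm_num : (-2 : ℝ) < -1) one_pos).const_mul (1/6))
    (fun x hx => (unboundedDensity_of_mem_Ioi hx).symm) measurableSet_Ioi

theorem setIntegral_unboundedDensity_Ioc : ∫ x in Ioc 0 1, unboundedDensity x = 1/3 := by
  rw [setIntegral_congr_fun measurableSet_Ioc fun x hx => unboundedDensity_of_mem_Ioc hx,
    integral_const_mul, ← intervalIntegral.integral_of_le zero_le_one,
    integral_rpow (.inl (by norm_num)), Real.one_rpow, Real.zero_rpow (by norm_num)]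
  norm_num

theorem setIntegral_unboundedDensity_Ioi : ∫ x in Ioi 1, unboundedDensity x = 1/6 := by
  rw [setIntegral_congr_fun measurableSet_Ioi fun x hx => unboundedDensity_of_mem_Ioi hx,
    integral_const_mul, integral_Ioi_rpow_of_lt (by norm_num) one_pos, Real.one_rpow]
  norm_num

theorem integral_unboundedDensity : ∫ x, unboundedDensity x = 1 := by
  have h := integral_comp_abs (f := unboundedDensity)
  simp_rw [unboundedDensity_abs] at h
  rw [h, ← Ioc_union_Ioi_eq_Ioi zero_le_one, setIntegral_union (Ioc_disjoint_Ioi le_rfl)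
    measurableSet_Ioi integrableOn_unboundedDensity_Ioc integrableOn_unboundedDensity_Ioi,
    setIntegral_unboundedDensity_Ioc, setIntegral_unboundedDensity_Ioi]
  norm_num

theorem tendsto_prod_comp_sub_atTop {G ι : Type*} [AddGroup G] [TopologicalSpace G]
    [IsTopologicalAddGroup G] [Fintype ι] {f : G → ℝ} (hf : Tendsto f (𝓝[≠] 0) atTop)
    (hpos : ∀ z ≠ 0, 0 < f z) (hcont : ∀ z ≠ 0, ContinuousAt f z) {x : ι → G}
    (hx : Function.Injective x) (i₀ : ι) :
    Tendsto (fun θ => ∏ i, f (x i - θ)) (𝓝[(range x)ᶜ] (x i₀)) atTop := by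
  classical
  have hne : ∀ i ∈ Finset.univ.erase i₀, x i - x i₀ ≠ 0 := fun i hi =>
    sub_ne_zero.2 fun h => (Finset.mem_erase.1 hi).1 (hx h)
  have hsub : ∀ y : G, Tendsto (fun θ => y - θ) (𝓝[(range x)ᶜ] (x i₀)) (𝓝 (y - x i₀)) :=
    fun y => (tendsto_const_nhds.sub tendsto_id).mono_left nhdsWithin_le_nhds
  have hsingular : Tendsto (fun θ => f (x i₀ - θ)) (𝓝[(range x)ᶜ] (x i₀)) atTop := by
    refine hf.comp (tendsto_nhdsWithin_of_tendsto_nhds_of_eventually_within _ ?_ ?_)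
    · simpa using hsub (x i₀)
    · filter_upwards [self_mem_nhdsWithin] with θ hθ
      exact sub_ne_zero.2 fun h => hθ ⟨i₀, h⟩
  have hregular := tendsto_finsetProd (Finset.univ.erase i₀) fun i hi =>
    (hcont _ (hne i hi)).tendsto.comp (hsub (x i))
  refine (hregular.pos_mul_atTop (Finset.prod_pos fun i hi => hpos _ (hne i hi))
    hsingular).congr fun θ => ?_
  exact Finset.prod_erase_mul _ (fun i => f (x i - θ)) (Finset.mem_univ i₀)

theorem Filter.Tendsto.exists_mem_gt_of_atTop {α : Type*} {l : Filter α} [l.NeBot] {g : α → ℝ}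
    (hg : Tendsto g l atTop) {s : Set α} (hs : s ∈ l) (M : ℝ) : ∃ a ∈ s, M < g a :=
  ((hg.eventually_gt_atTop M).and hs).exists.imp fun _ h => ⟨h.2, h.1⟩

theorem no_mle_for_unbounded_translation_family :
    (∫ x : ℝ, unboundedDensity x = 1) ∧
    ∀ (n : ℕ) (hn : 0 < n) (x : Fin n → ℝ), Function.Injective x →
      Tendsto (fun θ : ℝ => ∏ i, unboundedDensity (x i - θ))
        (nhdsWithin (x ⟨0, hn⟩) (Set.range x)ᶜ) atTop ∧
      ∀ Θ : Set ℝ, (nhdsWithin (x ⟨0, hn⟩) (Θ \ Set.range x)).NeBot →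
        (∀ M : ℝ, ∃ θ ∈ Θ, M < ∏ i, unboundedDensity (x i - θ)) ∧
        ¬∃ θ₀ ∈ Θ, ∀ θ ∈ Θ,
          ∏ i, unboundedDensity (x i - θ) ≤ ∏ i, unboundedDensity (x i - θ₀) := by
  refine ⟨integral_unboundedDensity, fun n hn x hx => ?_⟩
  have hlik := tendsto_prod_comp_sub_atTop tendsto_unboundedDensity_nhdsNE_zero
    (fun _ => unboundedDensity_pos) (fun _ => continuousAt_unboundedDensity) hx ⟨0, hn⟩
  refine ⟨hlik, fun Θ hΘ => ?_⟩
  have hunbdd : ∀ M : ℝ, ∃ θ ∈ Θ, M < ∏ i, unboundedDensity (x i - θ) :=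
    (hlik.mono_left (nhdsWithin_mono _ (sdiff_subset_compl _ _))).exists_mem_gt_of_atTop
      (mem_of_superset self_mem_nhdsWithin sdiff_subset)
  refine ⟨hunbdd, fun ⟨θ₀, _, hmax⟩ => ?_⟩
  obtain ⟨θ, hθ, hlt⟩ := hunbdd (∏ i, unboundedDensity (x i - θ₀))
  exact (hmax θ hθ).not_gt hlt
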